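/- arXiv:1906.03900 — 3 statements merged into one kernel-verified Lean document; each statement's English description precedes it below -/
import Mathlib

section
/- Let H be a real Hilbert space, (φ_i)_{i∈ℕ} a Hilbert basis of H, and (λ_i)_{i∈ℕ} a nondecreasing sequence of nonnegative real numbers with λ_{n+1} > 0. For every α with 0 ≤ α < 1, every n ∈ ℕ, and every finite family ψ_0, …, ψ_n of elements of H, there exists f ∈ H with ∑_{i∈ℕ} λ_i ⟨f,φ_i⟩² convergent such that ‖f − ∑_{i=0}^{n} ⟨f,ψ_i⟩ ψ_i‖² > α² (∑_{i∈ℕ} λ_i ⟨f,φ_i⟩²) / λ_{n+1}. In other words, the error bound of the truncated eigenbasis expansion cannot be uniformly improved by any factor α < 1 using any other family of n+1 functions. -/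
/-!
The first `n + 2` basis vectors span a space of dimension `n + 2`, so it contains a nonzero `f`
orthogonal to all `n + 1` vectors `ψ i`. The approximation then leaves all of `f`, while `f` has
energy at most `λ_{n+1} ‖f‖²` because its coefficients vanish beyond index `n + 1` and `λ` is
monotone; since `α < 1` the error `‖f‖²` exceeds `α²` times the bound.
-/

open Module Finset

section

variable {𝕜 E : Type*} [RCLike 𝕜] [NormedAddCommGroup E] [InnerProductSpace 𝕜 E]

theorem Submodule.exists_ne_zero_forall_inner_eq_zero_of_finrank_lt (K : Submodule 𝕜 E)
    {m : ℕ} (ψ : Fin m → E) (h : m < finrank 𝕜 K) :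
    ∃ f ∈ K, f ≠ 0 ∧ ∀ j, inner 𝕜 f (ψ j) = 0 := by
  have : FiniteDimensional 𝕜 K := .of_finrank_pos (by omega)
  let T : K →ₗ[𝕜] Fin m → 𝕜 :=
    LinearMap.pi fun j => innerₛₗ 𝕜 (ψ j) ∘ₗ K.subtype
  obtain ⟨⟨f, hfK⟩, hfT, hf0⟩ :=
    Submodule.exists_mem_ne_zero_of_ne_bot (T.ker_ne_bot_of_finrank_lt (by simpa using h))
  refine ⟨f, hfK, fun hf => hf0 (by simp [hf]), fun j => ?_⟩
  rw [inner_eq_zero_symm]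
  exact congrFun hfT j

theorem Orthonormal.finrank_span_range_fin {v : ℕ → E} (hv : Orthonormal 𝕜 v) (N : ℕ) :
    finrank 𝕜 (Submodule.span 𝕜 (Set.range fun i : Fin N => v i)) = N :=
  (finrank_span_eq_card (hv.comp _ Fin.val_injective).linearIndependent).trans (Fintype.card_fin N)

theorem Orthonormal.inner_eq_zero_of_mem_span_range_fin {v : ℕ → E} (hv : Orthonormal 𝕜 v)
    {N i : ℕ} (hi : N ≤ i) {f : E}
    (hf : f ∈ Submodule.span 𝕜 (Set.range fun j : Fin N => v j)) :
    inner 𝕜 f (v i) = 0 := by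
  have hle : Submodule.span 𝕜 (Set.range fun j : Fin N => v j) ≤ (𝕜 ∙ v i)ᗮ := by
    rw [Submodule.span_le]
    rintro _ ⟨j, rfl⟩
    exact Submodule.mem_orthogonal_singleton_iff_inner_left.2 (hv.inner_eq_zero (by omega))
  exact Submodule.mem_orthogonal_singleton_iff_inner_left.1 (hle hf)

end

section Real

variable {E : Type*} [NormedAddCommGroup E] [InnerProductSpace ℝ E]

theorem Orthonormal.sum_range_mul_inner_sq_le {v : ℕ → E} (hv : Orthonormal ℝ v)
    {lam : ℕ → ℝ} (hmono : Monotone lam) {N : ℕ} (hN : 0 ≤ lam N) (f : E) :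
    ∑ i ∈ range (N + 1), lam i * inner ℝ f (v i) ^ 2 ≤ lam N * ‖f‖ ^ 2 :=
  calc ∑ i ∈ range (N + 1), lam i * inner ℝ f (v i) ^ 2
      ≤ ∑ i ∈ range (N + 1), lam N * inner ℝ f (v i) ^ 2 := by
        gcongr with i hi
        exact hmono (Nat.lt_succ_iff.1 (mem_range.1 hi))
    _ = lam N * ∑ i ∈ range (N + 1), ‖inner ℝ (v i) f‖ ^ 2 := by
        simp [mul_sum, real_inner_comm]
    _ ≤ lam N * ‖f‖ ^ 2 := by gcongr; exact hv.sum_inner_products_le f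

end Real

theorem no_uniform_improvement_of_truncated_expansion_general
    {H : Type*} [NormedAddCommGroup H] [InnerProductSpace ℝ H]
    (φ : HilbertBasis ℕ ℝ H) (lam : ℕ → ℝ)
    (hmono : Monotone lam)
    (α : ℝ) (hα0 : 0 ≤ α) (hα1 : α < 1)
    (n : ℕ) (hpos : 0 < lam (n + 1)) (ψ : Fin (n + 1) → H) :
    ∃ f : H, Summable (fun i => lam i * (inner ℝ f (φ i) : ℝ) ^ 2) ∧
      ‖f - ∑ i, (inner ℝ f (ψ i) : ℝ) • ψ i‖ ^ 2 >
        α ^ 2 * (∑' i, lam i * (inner ℝ f (φ i) : ℝ) ^ 2) / lam (n + 1) := by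
  obtain ⟨f, hfK, hf0, hfψ⟩ :=
    Submodule.exists_ne_zero_forall_inner_eq_zero_of_finrank_lt
      (Submodule.span ℝ (Set.range fun i : Fin (n + 2) => φ i)) ψ
      (by rw [φ.orthonormal.finrank_span_range_fin]; omega)
  have hsum : HasSum (fun i => lam i * inner ℝ f (φ i) ^ 2)
      (∑ i ∈ range (n + 2), lam i * inner ℝ f (φ i) ^ 2) :=
    hasSum_sum_of_ne_finset_zero fun i hi => by
      rw [φ.orthonormal.inner_eq_zero_of_mem_span_range_fin (by simpa using hi) hfK]
      ring
  refine ⟨f, hsum.summable, ?_⟩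
  have hbound := φ.orthonormal.sum_range_mul_inner_sq_le hmono hpos.le f
  have hnorm : 0 < ‖f‖ ^ 2 := by positivity
  rw [hsum.tsum_eq, show f - ∑ i, inner ℝ f (ψ i) • ψ i = f by simp [hfψ], gt_iff_lt,
    div_lt_iff₀ hpos]
  calc α ^ 2 * ∑ i ∈ range (n + 2), lam i * inner ℝ f (φ i) ^ 2
      ≤ α ^ 2 * (lam (n + 1) * ‖f‖ ^ 2) := by gcongr
    _ < 1 * (lam (n + 1) * ‖f‖ ^ 2) := by gcongr; nlinarith
    _ = ‖f‖ ^ 2 * lam (n + 1) := by ring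

/-- Optimality of the Laplacian eigenbasis: for any `α < 1`, no family of `n+1`
functions `ψ` can uniformly improve the residual bound of the truncated
eigenbasis expansion by the factor `α`. -/
theorem no_uniform_improvement_of_truncated_expansion
    {H : Type*} [NormedAddCommGroup H] [InnerProductSpace ℝ H] [CompleteSpace H]
    (φ : HilbertBasis ℕ ℝ H) (lam : ℕ → ℝ)
    (hmono : Monotone lam) (hnonneg : ∀ i, 0 ≤ lam i)
    (α : ℝ) (hα0 : 0 ≤ α) (hα1 : α < 1)
    (n : ℕ) (hpos : 0 < lam (n + 1)) (ψ : Fin (n + 1) → H) :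
    ∃ f : H, Summable (fun i => lam i * (inner ℝ f (φ i) : ℝ) ^ 2) ∧
      ‖f - ∑ i, (inner ℝ f (ψ i) : ℝ) • ψ i‖ ^ 2 >
        α ^ 2 * (∑' i, lam i * (inner ℝ f (φ i) : ℝ) ^ 2) / lam (n + 1) :=
  no_uniform_improvement_of_truncated_expansion_general φ lam hmono α hα0 hα1 n hpos ψ
end

section
/- Let H be a real Hilbert space, Φ : H → H a self-adjoint continuous linear operator, and ℰ : H → H a continuous linear operator. Suppose φ : ℝ → H and μ : ℝ → ℝ are differentiable at 0, ‖φ(0)‖ = 1, and for all δ ∈ ℝ the perturbed eigenvalue equation Φ(φ(δ)) + δ·ℰ(φ(δ)) = μ(δ)·φ(δ) holds. Then |μ′(0)| ≤ ‖ℰ‖, where ‖ℰ‖ is the operator norm of ℰ; i.e., the computation of a simple eigenvalue of the spectral operator is numerically stable under perturbations of the operator. -/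
/-!
Pairing the perturbed eigenvalue equation with the fixed vector `φ 0` and differentiating at
`δ = 0` gives `μ' ‖φ 0‖² + μ 0 ⟪φ', φ 0⟫ = ⟪Φ φ', φ 0⟫ + ⟪ℰ (φ 0), φ 0⟫`. By symmetry of `Φ`,
`⟪Φ φ', φ 0⟫ = ⟪φ', Φ (φ 0)⟫ = μ 0 ⟪φ', φ 0⟫`, so `μ'(0)` is the Rayleigh quotient of `ℰ` at `φ 0`
(Hellmann–Feynman), and a Rayleigh quotient is bounded in absolute value by the operator norm.
-/

open Filter Topology
open scoped InnerProductSpace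

namespace LinearMap.IsSymmetric

variable {H : Type*} [NormedAddCommGroup H] [InnerProductSpace ℝ H]
  {Φ E : H →L[ℝ] H} {φ : ℝ → H} {μ : ℝ → ℝ} {φ' : H} {μ' : ℝ}

theorem hellmann_feynman (hΦ : (Φ : H →ₗ[ℝ] H).IsSymmetric)
    (hφ : HasDerivAt φ φ' 0) (hμ : HasDerivAt μ μ' 0)
    (heq : ∀ᶠ δ in 𝓝 0, Φ (φ δ) + δ • E (φ δ) = μ δ • φ δ) :
    μ' * ‖φ 0‖ ^ 2 = ⟪E (φ 0), φ 0⟫_ℝ := by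
  set u := φ 0
  have hΦu : Φ u = μ 0 • u := by simpa using heq.self_of_nhds
  have hlhs : HasDerivAt (fun δ => ⟪Φ (φ δ) + δ • E (φ δ), u⟫_ℝ) ⟪Φ φ' + E u, u⟫_ℝ 0 := by
    have hΦφ := Φ.hasFDerivAt.comp_hasDerivAt 0 hφ
    have hEφ := E.hasFDerivAt.comp_hasDerivAt 0 hφ
    simpa using (hΦφ.add ((hasDerivAt_id 0).smul hEφ)).inner ℝ (hasDerivAt_const 0 u)
  have hrhs : HasDerivAt (fun δ => ⟪μ δ • φ δ, u⟫_ℝ) ⟪μ 0 • φ' + μ' • u, u⟫_ℝ 0 := by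
    simpa using (hμ.smul hφ).inner ℝ (hasDerivAt_const 0 u)
  have hderiv := hrhs.unique <|
    hlhs.congr_of_eventuallyEq (heq.mono fun δ h => congrArg (⟪·, u⟫_ℝ) h.symm)
  have hΦφ' : ⟪Φ φ', u⟫_ℝ = μ 0 * ⟪φ', u⟫_ℝ :=
    calc ⟪Φ φ', u⟫_ℝ = ⟪φ', Φ u⟫_ℝ := hΦ φ' u
      _ = μ 0 * ⟪φ', u⟫_ℝ := by rw [hΦu, real_inner_smul_right]
  rw [inner_add_left, inner_add_left, hΦφ', real_inner_smul_left, real_inner_smul_left,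
    real_inner_self_eq_norm_sq] at hderiv
  linarith

theorem eigenvalue_deriv_eq_rayleighQuotient (hΦ : (Φ : H →ₗ[ℝ] H).IsSymmetric)
    (hφ : HasDerivAt φ φ' 0) (hμ : HasDerivAt μ μ' 0)
    (heq : ∀ᶠ δ in 𝓝 0, Φ (φ δ) + δ • E (φ δ) = μ δ • φ δ) (hφ0 : φ 0 ≠ 0) :
    μ' = E.rayleighQuotient (φ 0) := by
  rw [ContinuousLinearMap.rayleighQuotient, ContinuousLinearMap.reApplyInnerSelf_apply,
    RCLike.re_to_real, ← hellmann_feynman hΦ hφ hμ heq, mul_div_cancel_right₀]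
  positivity

end LinearMap.IsSymmetric

theorem eigenvalue_perturbation_stability_general
    {H : Type*} [NormedAddCommGroup H] [InnerProductSpace ℝ H]
    (Φ E : H →L[ℝ] H)
    (hΦ : ∀ f g : H, (inner ℝ (Φ f) g : ℝ) = inner ℝ f (Φ g))
    (φ : ℝ → H) (μ : ℝ → ℝ)
    (hφ : DifferentiableAt ℝ φ 0) (hμ : DifferentiableAt ℝ μ 0)
    (hnorm : ‖φ 0‖ = 1)
    (heq : ∀ δ : ℝ, Φ (φ δ) + δ • E (φ δ) = μ δ • φ δ) :
    |deriv μ 0| ≤ ‖E‖ := by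
  have hφ0 : φ 0 ≠ 0 := norm_ne_zero_iff.mp (hnorm ▸ one_ne_zero)
  rw [LinearMap.IsSymmetric.eigenvalue_deriv_eq_rayleighQuotient hΦ hφ.hasDerivAt
    hμ.hasDerivAt (.of_forall heq) hφ0]
  exact E.rayleighQuotient_le_norm (φ 0)

/-- Stability of a simple eigenvalue of a self-adjoint operator under linear
perturbations: the derivative of the perturbed eigenvalue is bounded by the
operator norm of the perturbation, `|μ′(0)| ≤ ‖ℰ‖`. -/
theorem eigenvalue_perturbation_stability
    {H : Type*} [NormedAddCommGroup H] [InnerProductSpace ℝ H] [CompleteSpace H]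
    (Φ E : H →L[ℝ] H)
    (hΦ : ∀ f g : H, (inner ℝ (Φ f) g : ℝ) = inner ℝ f (Φ g))
    (φ : ℝ → H) (μ : ℝ → ℝ)
    (hφ : DifferentiableAt ℝ φ 0) (hμ : DifferentiableAt ℝ μ 0)
    (hnorm : ‖φ 0‖ = 1)
    (heq : ∀ δ : ℝ, Φ (φ δ) + δ • E (φ δ) = μ δ • φ δ) :
    |deriv μ 0| ≤ ‖E‖ :=
  eigenvalue_perturbation_stability_general Φ E hΦ φ μ hφ hμ hnorm heq
end

section
/- Let B be an n×n real symmetric positive-definite matrix and X an n×n real matrix with Xᵀ B X = I, whose first column is the constant vector 𝟙 = (1,…,1)ᵀ. Let λ : Fin n → ℝ with λ_1 = 0 and λ_i ≠ 0 for all i ≥ 2. Define L̃ := X Λ Xᵀ B with Λ = diagonal(λ_1,…,λ_n), and its pseudo-inverse L̃† := X Λ† Xᵀ B with Λ† = diagonal(0, λ_2⁻¹,…,λ_n⁻¹). Then for every f ∈ ℝⁿ, L̃ (L̃† f) = f − (𝟙ᵀ B f) · 𝟙; i.e., g₁ = L̃† f is a solution of the Laplace equation L̃ g₁ = f̃, where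 f̃ is f minus its B-weighted mean. -/
/-!
Since `Xᵀ B X = 1`, the matrix `Xᵀ B` is the inverse of `X`, so `L̃ = X Λ X⁻¹` and
`L̃† = X Λ† X⁻¹` are diagonalised by the same basis and `L̃ L̃† = X (Λ Λ†) X⁻¹`.
Here `Λ Λ† = 1 - e₁ e₁ᵀ`, so `L̃ L̃† = 1 - (X e₁)(e₁ᵀ Xᵀ B) = 1 - 𝟙 𝟙ᵀ B`.
-/

open Matrix

namespace Matrix

variable {ι R : Type*} [Fintype ι] [DecidableEq ι] [CommRing R]

theorem mul_diagonal_mul_mul_mul_diagonal_mul {X M : Matrix ι ι R} (hMX : M * X = 1)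
    (d e : ι → R) :
    X * diagonal d * M * (X * diagonal e * M) = X * diagonal (d * e) * M := by
  calc X * diagonal d * M * (X * diagonal e * M)
      = X * diagonal d * (M * X) * diagonal e * M := by simp only [Matrix.mul_assoc]
    _ = X * diagonal (d * e) * M := by
      rw [hMX, Matrix.mul_one, Matrix.mul_assoc X, diagonal_mul_diagonal]
      rfl

theorem mul_diagonal_single_one_mul (X M : Matrix ι ι R) (i : ι) :
    X * diagonal (Pi.single i 1) * M = vecMulVec (Xᵀ i) (M i) := by
  rw [diagonal_single, single_eq_single_vecMulVec_single, mul_vecMulVec, vecMulVec_mul,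
    mulVec_single_one, single_one_vecMul]
  rfl

theorem mul_diagonal_one_sub_single_mul {X M : Matrix ι ι R} (hXM : X * M = 1) (i : ι) :
    X * diagonal (fun j => 1 - Pi.single i 1 j) * M = 1 - vecMulVec (Xᵀ i) (M i) := by
  rw [← diagonal_sub, diagonal_one, Matrix.mul_sub, Matrix.sub_mul, Matrix.mul_one, hXM,
    mul_diagonal_single_one_mul]

end Matrix

theorem Pi.mul_ite_inv_eq_one_sub_single {ι K : Type*} [DecidableEq ι] [Field K] {d : ι → K}
    {i : ι} (hi : d i = 0) (hd : ∀ j, j ≠ i → d j ≠ 0) :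
    d * (fun j => if j = i then 0 else (d j)⁻¹) = fun j => 1 - Pi.single i 1 j := by
  funext j
  rcases eq_or_ne j i with rfl | hj
  · simp [hi]
  · simp [hj, hd j hj]

theorem laplacian_pseudo_inverse_equation_general
    {n : ℕ} [NeZero n] (B X : Matrix (Fin n) (Fin n) ℝ)
    (hX : Xᵀ * B * X = 1)
    (hcol : ∀ i, X i 0 = 1)
    (lam : Fin n → ℝ) (hlam0 : lam 0 = 0) (hlam : ∀ l : Fin n, l ≠ 0 → lam l ≠ 0)
    (f : Fin n → ℝ) :
    (X * Matrix.diagonal lam * Xᵀ * B).mulVec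
        ((X * Matrix.diagonal (fun l => if l = 0 then 0 else (lam l)⁻¹) * Xᵀ * B).mulVec f) =
      f - ((fun _ => (1 : ℝ)) ⬝ᵥ B.mulVec f) • (fun _ => (1 : ℝ)) := by
  have hXinv : X * (Xᵀ * B) = 1 := mul_eq_one_comm.mp hX
  have hfirst_col : Xᵀ 0 = fun _ => 1 := funext hcol
  have hfirst_row : (Xᵀ * B) 0 = (fun _ => 1) ᵥ* B := by
    rw [mul_apply_eq_vecMul, hfirst_col]
  have hcomp : X * diagonal lam * (Xᵀ * B) *
      (X * diagonal (fun l => if l = 0 then 0 else (lam l)⁻¹) * (Xᵀ * B)) =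
        1 - vecMulVec (fun _ => 1) ((fun _ => 1) ᵥ* B) := by
    rw [mul_diagonal_mul_mul_mul_diagonal_mul hX, Pi.mul_ite_inv_eq_one_sub_single hlam0 hlam,
      mul_diagonal_one_sub_single_mul hXinv, hfirst_col, hfirst_row]
  simp only [Matrix.mul_assoc _ Xᵀ B]
  rw [mulVec_mulVec, hcomp, sub_mulVec, one_mulVec, vecMulVec_mulVec, op_smul_eq_smul,
    dotProduct_mulVec]

/-- Spectrum-free evaluation of the Laplacian pseudo-inverse: if the first
column of `X` is the constant vector `𝟙` (eigenvector of the eigenvalue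
`λ_1 = 0`), then `L̃ (L̃† f) = f − (𝟙ᵀ B f) 𝟙`, i.e. `L̃† f` solves the Laplace
equation with right-hand side `f` minus its `B`-weighted mean. -/
theorem laplacian_pseudo_inverse_equation
    {n : ℕ} [NeZero n] (B X : Matrix (Fin n) (Fin n) ℝ)
    (hB : B.PosDef) (hBsymm : B.IsSymm)
    (hX : Xᵀ * B * X = 1)
    (hcol : ∀ i, X i 0 = 1)
    (lam : Fin n → ℝ) (hlam0 : lam 0 = 0) (hlam : ∀ l : Fin n, l ≠ 0 → lam l ≠ 0)
    (f : Fin n → ℝ) :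
    (X * Matrix.diagonal lam * Xᵀ * B).mulVec
        ((X * Matrix.diagonal (fun l => if l = 0 then 0 else (lam l)⁻¹) * Xᵀ * B).mulVec f) =
      f - ((fun _ => (1 : ℝ)) ⬝ᵥ B.mulVec f) • (fun _ => (1 : ℝ)) :=
  laplacian_pseudo_inverse_equation_general B X hX hcol lam hlam0 hlam f
end
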